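/- f(5) = 7 and d(5) = 18: the minimum number of fragments in a fragment tiling of the 5 × 5 board S₅ is 7, and the maximum number of dominoes in a saturated domino covering of S₅ is 18. -/

import Mathlib

/-- A cell of the square grid. -/
abbrev Cell : Type := ℤ × ℤ

/-- Two cells are adjacent iff they differ by 1 in exactly one coordinate. -/
def Adj (p q : Cell) : Prop := |p.1 - q.1| + |p.2 - q.2| = 1

/-- A board: a finite nonempty set of cells, each adjacent to another cell of the board. -/
def IsBoard (B : Set Cell) : Prop :=
  B.Finite ∧ B.Nonempty ∧ ∀ p ∈ B, ∃ q ∈ B, Adj p q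

/-- A domino of `B`: a two-element subset of `B` whose cells are adjacent. -/
def IsDomino (B : Set Cell) (e : Finset Cell) : Prop :=
  ∃ p q : Cell, p ∈ B ∧ q ∈ B ∧ Adj p q ∧ e = {p, q}

/-- A domino covering of `B`: a finite set of dominoes of `B` whose union is `B`. -/
def IsDominoCovering (B : Set Cell) (D : Finset (Finset Cell)) : Prop :=
  (∀ e ∈ D, IsDomino B e) ∧ (⋃ e ∈ D, (↑e : Set Cell)) = B

/-- A saturated domino covering: removing any domino leaves some cell uncovered. -/
def IsSaturatedCovering (B : Set Cell) (D : Finset (Finset Cell)) : Prop :=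
  IsDominoCovering B D ∧ ∀ e ∈ D, (⋃ e' ∈ D.erase e, (↑e' : Set Cell)) ⊂ B

/-- `dNum B` is the maximum number of dominoes in a saturated domino covering of `B`. -/
noncomputable def dNum (B : Set Cell) : ℕ :=
  sSup {k : ℕ | ∃ D : Finset (Finset Cell), IsSaturatedCovering B D ∧ D.card = k}

/-- The X-pentomino centered at `c`: the cell `c` together with its four adjacent cells. -/
def Xpent (c : Cell) : Set Cell :=
  {c, (c.1 + 1, c.2), (c.1 - 1, c.2), (c.1, c.2 + 1), (c.1, c.2 - 1)}

/-- A set of cells is connected under adjacency. -/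
def ConnectedUnderAdj (F : Set Cell) : Prop :=
  ∀ p ∈ F, ∀ q ∈ F, Relation.ReflTransGen (fun a b => a ∈ F ∧ b ∈ F ∧ Adj a b) p q

/-- A fragment: a connected subset of some X-pentomino with at least two cells. -/
def IsFragment (F : Set Cell) : Prop :=
  (∃ c : Cell, F ⊆ Xpent c) ∧ 2 ≤ F.ncard ∧ ConnectedUnderAdj F

/-- A fragment tiling of `B`: a partition of `B` into pairwise disjoint fragments. -/
def IsFragmentTiling (B : Set Cell) (T : Finset (Set Cell)) : Prop :=
  (∀ F ∈ T, IsFragment F) ∧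
  (∀ F ∈ T, ∀ G ∈ T, F ≠ G → Disjoint F G) ∧
  (⋃ F ∈ T, F) = B

/-- `fNum B` is the minimum number of fragments in a fragment tiling of `B`. -/
noncomputable def fNum (B : Set Cell) : ℕ :=
  sInf {k : ℕ | ∃ T : Finset (Set Cell), IsFragmentTiling B T ∧ T.card = k}

/-- `xNum B` is the minimum number of X-pentominoes (centered anywhere, allowed to
overlap and to extend outside `B`) whose union covers `B`. -/
noncomputable def xNum (B : Set Cell) : ℕ :=
  sInf {k : ℕ | ∃ C : Finset Cell, B ⊆ (⋃ c ∈ C, Xpent c) ∧ C.card = k}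

/-- The `n × n` board `{0, …, n-1} × {0, …, n-1}`. -/
def Sq (n : ℕ) : Set Cell := {p : Cell | 0 ≤ p.1 ∧ p.1 < n ∧ 0 ≤ p.2 ∧ p.2 < n}

/-!
Both values rest on one lower bound: every cover of the 5 × 5 board by X-pentominoes uses at
least 7 of them. It comes from a weighting of the board with total weight 69 in which every
X-pentomino carries weight at most 11, and 69 > 6 · 11.

Each fragment lies in an X-pentomino, so a fragment tiling yields a cover by as many
X-pentominoes, whence `f(5) ≥ 7`. In a saturated domino covering every domino has a private
cell, i.e. a cell covered by no other domino; choosing one per domino, the remaining cells are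
centers of X-pentominoes covering the board, because the partner of a chosen private cell is
never chosen itself. Hence `d(5) ≤ 25 - 7`. Both bounds are attained by a tiling into 7 stars,
whose spokes form a saturated covering by 18 dominoes.
-/

open Finset

instance : DecidableRel Adj := fun _ _ => inferInstanceAs (Decidable (_ = _))

theorem Adj.symm {p q : Cell} (h : Adj p q) : Adj q p := by
  unfold Adj at h ⊢
  rwa [abs_sub_comm, abs_sub_comm q.2]

theorem Adj.ne {p q : Cell} (h : Adj p q) : p ≠ q := by
  rintro rfl
  simp [Adj] at h

theorem self_mem_Xpent (c : Cell) : c ∈ Xpent c := Set.mem_insert c _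

theorem mem_Xpent_of_adj {p c : Cell} (h : Adj p c) : p ∈ Xpent c := by
  obtain ⟨a, b⟩ := p
  obtain ⟨x, y⟩ := c
  have h' : |a - x| + |b - y| = 1 := h
  simp only [Xpent, Set.mem_insert_iff, Set.mem_singleton_iff, Prod.mk.injEq]
  rcases abs_cases (a - x) with ⟨_, _⟩ | ⟨_, _⟩ <;> rcases abs_cases (b - y) with ⟨_, _⟩ | ⟨_, _⟩ <;>
    omega

theorem IsDomino.exists_adj_of_mem {B : Set Cell} {e : Finset Cell} (he : IsDomino B e)
    {p : Cell} (hp : p ∈ e) : ∃ q ∈ e, Adj p q := by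
  obtain ⟨u, v, -, -, huv, rfl⟩ := he
  rcases mem_insert.1 hp with rfl | hp
  · exact ⟨v, by simp, huv⟩
  · rw [mem_singleton.1 hp]
    exact ⟨u, by simp, huv.symm⟩

def xpentFinset (c : Cell) : Finset Cell :=
  {c, (c.1 + 1, c.2), (c.1 - 1, c.2), (c.1, c.2 + 1), (c.1, c.2 - 1)}

theorem coe_xpentFinset (c : Cell) : (xpentFinset c : Set Cell) = Xpent c := by
  simp [xpentFinset, Xpent]

def sqFinset (n : ℕ) : Finset Cell := (range n ×ˢ range n).image fun ij => ((ij.1 : ℤ), (ij.2 : ℤ))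

theorem coe_sqFinset (n : ℕ) : (sqFinset n : Set Cell) = Sq n := by
  ext ⟨a, b⟩
  simp only [sqFinset, coe_image, coe_product, coe_range, Set.mem_image, Set.mem_prod,
    Set.mem_Iio, Prod.exists, Prod.mk.injEq, Sq, Set.mem_ofPred_eq]
  constructor
  · rintro ⟨i, j, ⟨hi, hj⟩, rfl, rfl⟩
    omega
  · rintro ⟨ha, ha', hb, hb'⟩
    exact ⟨a.toNat, b.toNat, ⟨by omega, by omega⟩, by omega, by omega⟩

theorem mem_sqFinset {n : ℕ} {p : Cell} :
    p ∈ sqFinset n ↔ 0 ≤ p.1 ∧ p.1 < n ∧ 0 ≤ p.2 ∧ p.2 < n := by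
  rw [← mem_coe, coe_sqFinset]
  rfl

theorem isFragment_insert {c : Cell} {L : Finset Cell} (hL : L.Nonempty)
    (hadj : ∀ p ∈ L, Adj c p) : IsFragment (insert c L : Finset Cell) := by
  have hc : c ∉ L := fun hc => (hadj c hc).ne rfl
  refine ⟨⟨c, fun p hp => ?_⟩, ?_, fun p hp q hq => ?_⟩
  · rcases mem_insert.1 hp with rfl | hp
    exacts [self_mem_Xpent p, mem_Xpent_of_adj (hadj p hp).symm]
  · rw [Set.ncard_coe_finset, card_insert_of_notMem hc]
    exact Nat.succ_le_succ hL.card_pos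
  · have from_center : ∀ x ∈ insert c L, Relation.ReflTransGen
        (fun a b => a ∈ ((insert c L : Finset Cell) : Set Cell) ∧
          b ∈ ((insert c L : Finset Cell) : Set Cell) ∧ Adj a b) c x := by
      intro x hx
      rcases mem_insert.1 hx with rfl | hx
      · exact .refl
      · exact .single ⟨by simp, by simp [hx], hadj x hx⟩
    rcases mem_insert.1 hp with rfl | hp
    · exact from_center q hq
    · exact .head ⟨by simp [hp], by simp, (hadj p hp).symm⟩ (from_center q hq)

theorem xNum_le_card_of_cover {B : Set Cell} {C : Finset Cell} (hC : B ⊆ ⋃ c ∈ C, Xpent c) :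
    xNum B ≤ C.card :=
  Nat.sInf_le ⟨C, hC, rfl⟩

theorem IsFragmentTiling.xNum_le_card {B : Set Cell} {T : Finset (Set Cell)}
    (hT : IsFragmentTiling B T) : xNum B ≤ T.card := by
  classical
  choose c hc using fun F (hF : F ∈ T) => (hT.1 F hF).1
  refine (xNum_le_card_of_cover (C := T.attach.image fun F => c F.1 F.2) fun p hp => ?_).trans
    (card_image_le.trans card_attach.le)
  rw [← hT.2.2] at hp
  obtain ⟨F, hF, hpF⟩ := Set.mem_iUnion₂.1 hp
  exact Set.mem_iUnion₂.2 ⟨_, mem_image_of_mem _ (mem_attach _ ⟨F, hF⟩), hc F hF hpF⟩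

theorem IsDominoCovering.isSaturatedCovering_iff {B : Set Cell} {D : Finset (Finset Cell)}
    (hD : IsDominoCovering B D) :
    IsSaturatedCovering B D ↔ ∀ e ∈ D, ∃ p ∈ e, ∀ e' ∈ D, p ∈ e' → e' = e := by
  constructor
  · rintro ⟨-, hsat⟩ e he
    obtain ⟨p, hpB, hp⟩ := Set.exists_of_ssubset (hsat e he)
    have hpriv : ∀ e' ∈ D, p ∈ e' → e' = e := fun e' he' hpe' =>
      by_contra fun hne => hp (Set.mem_biUnion (mem_erase.2 ⟨hne, he'⟩) hpe')
    rw [← hD.2] at hpB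
    obtain ⟨e', he', hpe'⟩ := Set.mem_iUnion₂.1 hpB
    exact ⟨p, hpriv e' he' hpe' ▸ hpe', hpriv⟩
  · intro h
    refine ⟨hD, fun e he => ?_⟩
    obtain ⟨p, hpe, hpriv⟩ := h e he
    rw [← hD.2]
    refine (Set.ssubset_iff_of_subset (Set.biUnion_mono (fun _ => mem_of_mem_erase) fun _ _ =>
      subset_rfl)).2 ⟨p, Set.mem_biUnion he hpe, fun hp => ?_⟩
    obtain ⟨e', he', hpe'⟩ := Set.mem_iUnion₂.1 hp
    exact (mem_erase.1 he').1 (hpriv e' (mem_of_mem_erase he') hpe')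

theorem IsSaturatedCovering.card_add_xNum_le {B : Set Cell} {D : Finset (Finset Cell)}
    (hD : IsSaturatedCovering B D) : D.card + xNum B ≤ B.ncard := by
  classical
  obtain ⟨hdom, hcov⟩ := hD.1
  choose priv hpriv_mem hpriv using hD.1.isSaturatedCovering_iff.1 hD
  set S := D.biUnion id
  have hBS : B = S := by rw [← hcov, coe_biUnion, set_biUnion_coe]; rfl
  set P := D.attach.image fun e => priv e.1 e.2
  have hP : ∀ b ∈ P, ∃ e, ∃ he : e ∈ D, priv e he = b := by
    simp [P]
  have hPcard : P.card = D.card := by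
    refine (card_image_of_injective _ fun e e' h => Subtype.ext ?_).trans card_attach
    exact hpriv e'.1 e'.2 e.1 e.2 (h ▸ hpriv_mem e.1 e.2)
  have hPS : P ⊆ S := fun b hb => by
    obtain ⟨e, he, rfl⟩ := hP b hb
    exact mem_biUnion.2 ⟨e, he, hpriv_mem e he⟩
  have hcover : B ⊆ ⋃ q ∈ S \ P, Xpent q := by
    rw [hBS]
    intro b hbS
    by_cases hbP : b ∈ P
    · obtain ⟨e, he, rfl⟩ := hP b hbP
      obtain ⟨v, hve, hbv⟩ := (hdom e he).exists_adj_of_mem (hpriv_mem e he)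
      have hvP : v ∉ P := fun hvP => by
        obtain ⟨e', he', rfl⟩ := hP v hvP
        obtain rfl := hpriv e' he' e he hve
        exact hbv.ne rfl
      exact Set.mem_biUnion (mem_sdiff.2 ⟨mem_biUnion.2 ⟨e, he, hve⟩, hvP⟩) (mem_Xpent_of_adj hbv)
    · exact Set.mem_biUnion (mem_sdiff.2 ⟨hbS, hbP⟩) (self_mem_Xpent b)
  have hxNum := xNum_le_card_of_cover hcover
  rw [card_sdiff_of_subset hPS, hPcard] at hxNum
  have hncard : B.ncard = S.card := by rw [hBS, Set.ncard_coe_finset]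
  have := card_le_card hPS
  omega

theorem sum_le_card_mul_of_cover (w : Cell → ℕ) {m : ℕ}
    (hw : ∀ c, ∑ p ∈ xpentFinset c, w p ≤ m) {S C : Finset Cell}
    (hC : (S : Set Cell) ⊆ ⋃ c ∈ C, Xpent c) : ∑ p ∈ S, w p ≤ C.card * m := by
  classical
  have hsub : S ⊆ C.biUnion xpentFinset := fun p hp => by
    obtain ⟨c, hc, hpc⟩ := Set.mem_iUnion₂.1 (hC hp)
    exact mem_biUnion.2 ⟨c, hc, by rwa [← mem_coe, coe_xpentFinset]⟩
  calc ∑ p ∈ S, w p ≤ ∑ p ∈ C.biUnion xpentFinset, w p := sum_le_sum_of_subset hsub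
    _ ≤ ∑ c ∈ C, ∑ p ∈ xpentFinset c, w p := by
      rw [← sup_eq_biUnion]
      refine apply_sup_le_sum (f := fun s => ∑ p ∈ s, w p) sum_empty (fun {s t} => ?_) C
      rw [← sum_union_inter]
      exact Nat.le_add_right _ _
    _ ≤ C.card * m := by simpa using sum_le_card_nsmul C _ m fun c _ => hw c

-- Row `i` of the table lists the weights of the cells `(i, 0), …, (i, 4)`.
def weight5 (p : Cell) : ℕ :=
  if p ∈ sqFinset 5 then
    ([[4, 2, 4, 5, 1], [5, 1, 0, 1, 5], [1, 3, 5, 0, 4], [2, 1, 3, 1, 2], [7, 2, 1, 5, 4]].getD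
      p.1.toNat []).getD p.2.toNat 0
  else 0

theorem sum_weight5_sqFinset : ∑ p ∈ sqFinset 5, weight5 p = 69 := by decide

theorem sum_weight5_xpentFinset_le (c : Cell) : ∑ p ∈ xpentFinset c, weight5 p ≤ 11 := by
  obtain ⟨a, b⟩ := c
  by_cases hnear : a ∈ Icc (-1 : ℤ) 5 ∧ b ∈ Icc (-1 : ℤ) 5
  · have hbound : ∀ a ∈ Icc (-1 : ℤ) 5, ∀ b ∈ Icc (-1 : ℤ) 5,
        ∑ p ∈ xpentFinset (a, b), weight5 p ≤ 11 := by decide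
    exact hbound a hnear.1 b hnear.2
  · have hzero : ∀ p ∈ xpentFinset (a, b), weight5 p = 0 := fun p hp => by
      refine if_neg fun hp5 => hnear ?_
      simp only [xpentFinset, mem_insert, mem_singleton] at hp
      rw [mem_sqFinset] at hp5
      simp only [mem_Icc]
      rcases hp with rfl | rfl | rfl | rfl | rfl <;> dsimp only at hp5 <;> omega
    simp [sum_eq_zero hzero]

theorem seven_le_xNum_sq_five : 7 ≤ xNum (Sq 5) := by
  have hself : Sq 5 ⊆ ⋃ c ∈ sqFinset 5, Xpent c := fun p hp =>
    Set.mem_biUnion (by rwa [coe_sqFinset]) (self_mem_Xpent p)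
  refine le_csInf ⟨_, _, hself, rfl⟩ fun k ⟨C, hC, hk⟩ => ?_
  have h := sum_le_card_mul_of_cover weight5 sum_weight5_xpentFinset_le
    (S := sqFinset 5) (C := C) (by rwa [coe_sqFinset])
  rw [sum_weight5_sqFinset] at h
  omega

-- Each entry is a center together with the neighbours it is joined to.
def stars5 : Finset (Cell × Finset Cell) :=
  {((0, 0), {(1, 0)}), ((0, 2), {(0, 1), (0, 3), (1, 2)}), ((1, 4), {(0, 4), (1, 3), (2, 4)}),
    ((2, 1), {(1, 1), (2, 0), (2, 2), (3, 1)}), ((3, 3), {(2, 3), (3, 2), (3, 4)}),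
    ((4, 0), {(3, 0), (4, 1)}), ((4, 3), {(4, 2), (4, 4)})}

def fragments5 : Finset (Finset Cell) := stars5.image fun s => insert s.1 s.2

def dominoes5 : Finset (Finset Cell) := stars5.biUnion fun s => s.2.image fun p => {s.1, p}

theorem adj_of_mem_stars5 : ∀ s ∈ stars5, s.2.Nonempty ∧ ∀ p ∈ s.2, Adj s.1 p := by decide

theorem isFragmentTiling_fragments5 :
    IsFragmentTiling (Sq 5) (fragments5.map coeEmb.toEmbedding) := by
  refine ⟨?_, ?_, ?_⟩
  · simp only [fragments5, mem_map, mem_image, RelEmbedding.coe_toEmbedding, coe_coeEmb]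
    rintro _ ⟨_, ⟨s, hs, rfl⟩, rfl⟩
    exact isFragment_insert (adj_of_mem_stars5 s hs).1 (adj_of_mem_stars5 s hs).2
  · simp only [mem_map, RelEmbedding.coe_toEmbedding, coe_coeEmb]
    rintro _ ⟨f, hf, rfl⟩ _ ⟨g, hg, rfl⟩ hfg
    have hdisj : ∀ f ∈ fragments5, ∀ g ∈ fragments5, f ≠ g → Disjoint f g := by decide
    exact disjoint_coe.2 (hdisj f hf g hg fun h => hfg (h ▸ rfl))
  · have hcover : fragments5.biUnion id = sqFinset 5 := by decide
    ext p
    simp [← coe_sqFinset, ← hcover]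

theorem isSaturatedCovering_dominoes5 : IsSaturatedCovering (Sq 5) dominoes5 := by
  have hcover : IsDominoCovering (Sq 5) dominoes5 := by
    refine ⟨?_, ?_⟩
    · have hmem : ∀ s ∈ stars5, ∀ p ∈ s.2, s.1 ∈ sqFinset 5 ∧ p ∈ sqFinset 5 := by decide
      simp only [dominoes5, mem_biUnion, mem_image]
      rintro _ ⟨s, hs, p, hp, rfl⟩
      rw [← coe_sqFinset]
      exact ⟨s.1, p, (hmem s hs p hp).1, (hmem s hs p hp).2, (adj_of_mem_stars5 s hs).2 p hp, rfl⟩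
    · have hunion : dominoes5.biUnion id = sqFinset 5 := by decide
      simp [← coe_sqFinset, ← hunion]
  exact hcover.isSaturatedCovering_iff.2 (by decide)

/-- `f(5) = 7` and `d(5) = 18` for the 5 × 5 board. -/
theorem fNum_dNum_5 : fNum (Sq 5) = 7 ∧ dNum (Sq 5) = 18 := by
  have hncard : (Sq 5).ncard = 25 := by rw [← coe_sqFinset, Set.ncard_coe_finset]; decide
  have hsat_le : ∀ D, IsSaturatedCovering (Sq 5) D → D.card ≤ 18 := fun D hD => by
    have := hD.card_add_xNum_le
    have := seven_le_xNum_sq_five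
    omega
  constructor
  · refine le_antisymm (Nat.sInf_le ⟨_, isFragmentTiling_fragments5, by rw [card_map]; decide⟩) ?_
    refine le_csInf ⟨_, _, isFragmentTiling_fragments5, rfl⟩ ?_
    rintro k ⟨T, hT, rfl⟩
    exact seven_le_xNum_sq_five.trans hT.xNum_le_card
  · have hbdd : 18 ∈ upperBounds {k | ∃ D, IsSaturatedCovering (Sq 5) D ∧ D.card = k} := by
      rintro k ⟨D, hD, rfl⟩
      exact hsat_le D hD
    exact le_antisymm (csSup_le ⟨_, _, isSaturatedCovering_dominoes5, rfl⟩ hbdd)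
      (le_csSup ⟨18, hbdd⟩ ⟨_, isSaturatedCovering_dominoes5, by decide⟩)
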